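/- For all real numbers x > 0, y > 0, and 0 < s < 1/2, one has β(x+4s, y) ≤ β(x,y) · (x(x+1)/((x+1)² + y²))^{2s}. -/

import Mathlib

/-!
Integrating the derivatives of `cos t ^ (x + 1) * exp (y * t)` and of
`cos t ^ x * exp (y * t) * sin t` over `[-π/2, π/2]` (both vanish at the endpoints) gives
two linear relations between `β(x, y)`, `β(x + 2, y)` and the sine moment
`∫ cos^x t e^{yt} sin t dt`; eliminating the sine moment yields
`((x + 1)² + y²) β(x + 2, y) = x (x + 1) β(x, y)`.
Hölder's inequality makes `x ↦ β(x, y)` log-convex, so from `x + 4s = (1 - 2s) x + 2s (x + 2)`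
we get `β(x + 4s, y) ≤ β(x, y) ^ (1 - 2s) β(x + 2, y) ^ (2s)`, and the recurrence finishes.
-/

open MeasureTheory

/-- `β(x,y) = ∫_{-π/2}^{π/2} (cos t)^{x-1} e^{yt} dt`. -/
noncomputable def beta (x y : ℝ) : ℝ :=
  ∫ t in (-(Real.pi / 2))..(Real.pi / 2), (Real.cos t) ^ (x - 1) * Real.exp (y * t)

open Real Set intervalIntegral

theorem integral_rpow_mul_rpow_le_of_nonneg {α : Type*} [MeasurableSpace α] {μ : Measure α}
    {f g : α → ℝ} (hf₀ : 0 ≤ᵐ[μ] f) (hg₀ : 0 ≤ᵐ[μ] g) (hf : Integrable f μ) (hg : Integrable g μ)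
    {a b : ℝ} (ha : 0 ≤ a) (hb : 0 ≤ b) (hab : a + b = 1) :
    ∫ t, f t ^ a * g t ^ b ∂μ ≤ (∫ t, f t ∂μ) ^ a * (∫ t, g t ∂μ) ^ b := by
  have hfg₀ : 0 ≤ᵐ[μ] fun t => f t ^ a * g t ^ b := by
    filter_upwards [hf₀, hg₀] with t hft hgt
    exact mul_nonneg (rpow_nonneg hft a) (rpow_nonneg hgt b)
  have hofReal : (fun t => ENNReal.ofReal (f t ^ a * g t ^ b)) =ᵐ[μ]
      fun t => ENNReal.ofReal (f t) ^ a * ENNReal.ofReal (g t) ^ b := by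
    filter_upwards [hf₀, hg₀] with t hft hgt
    rw [ENNReal.ofReal_mul (rpow_nonneg hft a), ENNReal.ofReal_rpow_of_nonneg hft ha,
      ENNReal.ofReal_rpow_of_nonneg hgt hb]
  have hmeas : AEStronglyMeasurable (fun t => f t ^ a * g t ^ b) μ :=
    ((hf.1.aemeasurable.pow_const a).mul (hg.1.aemeasurable.pow_const b)).aestronglyMeasurable
  have holder := ENNReal.lintegral_mul_norm_pow_le hf.1.aemeasurable.ennreal_ofReal
    hg.1.aemeasurable.ennreal_ofReal ha hb hab
  rw [integral_eq_lintegral_of_nonneg_ae hfg₀ hmeas,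
    integral_eq_lintegral_of_nonneg_ae hf₀ hf.1,
    integral_eq_lintegral_of_nonneg_ae hg₀ hg.1, lintegral_congr_ae hofReal, ENNReal.toReal_rpow,
    ENNReal.toReal_rpow, ← ENNReal.toReal_mul]
  exact ENNReal.toReal_mono (ENNReal.mul_ne_top
    (ENNReal.rpow_ne_top_of_nonneg ha hf.lintegral_lt_top.ne)
    (ENNReal.rpow_ne_top_of_nonneg hb hg.lintegral_lt_top.ne)) holder

theorem intervalIntegrable_cos_rpow_zero_pi_div_two {r : ℝ} (hr : -1 < r) :
    IntervalIntegrable (fun t => cos t ^ r) volume 0 (π / 2) := by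
  rcases le_or_gt 0 r with hr₀ | hr₀
  · exact (continuous_cos.rpow_const fun _ => Or.inr hr₀).intervalIntegrable _ _
  have hdom : IntervalIntegrable (fun t => (2 / π) ^ r * (π / 2 - t) ^ r) volume 0 (π / 2) := by
    simpa using ((intervalIntegrable_rpow' hr (a := 0) (b := π / 2)).comp_sub_left
      (π / 2)).symm.const_mul ((2 / π) ^ r)
  refine hdom.mono_fun' (continuous_cos.measurable.pow_const r).aestronglyMeasurable ?_
  rw [uIoc_of_le pi_div_two_pos.le]
  refine (ae_restrict_iff' measurableSet_Ioc).2 (ae_of_all _ fun t ⟨ht₀, htπ⟩ => ?_)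
  dsimp only
  rw [norm_of_nonneg (rpow_nonneg (cos_nonneg_of_mem_Icc ⟨by linarith [pi_pos], htπ⟩) _)]
  rcases htπ.eq_or_lt with rfl | htπ
  · simp [zero_rpow hr₀.ne]
  -- Jordan's inequality `2 / π * u ≤ sin u`: `cos t` vanishes only linearly at `π / 2`.
  have hjordan : 2 / π * (π / 2 - t) ≤ cos t := by
    rw [← sin_pi_div_two_sub]
    exact mul_le_sin (by linarith) (by linarith)
  calc cos t ^ r ≤ (2 / π * (π / 2 - t)) ^ r :=
        rpow_le_rpow_of_nonpos (by have := pi_pos; positivity) hjordan hr₀.le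
    _ = (2 / π) ^ r * (π / 2 - t) ^ r := mul_rpow (by positivity) (by linarith)

theorem intervalIntegrable_cos_rpow {r : ℝ} (hr : -1 < r) :
    IntervalIntegrable (fun t => cos t ^ r) volume (-(π / 2)) (π / 2) := by
  have hhalf := intervalIntegrable_cos_rpow_zero_pi_div_two hr
  have hneg := (IntervalIntegrable.iff_comp_neg (by finiteness)).1 hhalf
  simp only [cos_neg, neg_zero] at hneg
  exact hneg.symm.trans hhalf

theorem intervalIntegrable_beta_integrand {r : ℝ} (hr : -1 < r) (y : ℝ) :
    IntervalIntegrable (fun t => cos t ^ r * exp (y * t)) volume (-(π / 2)) (π / 2) :=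
  (intervalIntegrable_cos_rpow hr).mul_continuousOn (by fun_prop)

theorem beta_pos {x : ℝ} (hx : 0 < x) (y : ℝ) : 0 < beta x y :=
  intervalIntegral_pos_of_pos_on (intervalIntegrable_beta_integrand (by linarith) y)
    (fun t ht => mul_pos (rpow_pos_of_pos (cos_pos_of_mem_Ioo ht) _) (exp_pos _))
    (by linarith [pi_pos])

theorem beta_eq_setIntegral (x y : ℝ) :
    beta x y = ∫ t in Ioo (-(π / 2)) (π / 2), cos t ^ (x - 1) * exp (y * t) := by
  rw [beta, integral_of_le (by linarith [pi_pos]), integral_Ioc_eq_integral_Ioo]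

theorem beta_mul_add_mul_le_rpow_beta_mul_rpow_beta {x z a b : ℝ} (hx : 0 < x) (hz : 0 < z)
    (ha : 0 ≤ a) (hb : 0 ≤ b) (hab : a + b = 1) (y : ℝ) :
    beta (a * x + b * z) y ≤ beta x y ^ a * beta z y ^ b := by
  have hnonneg : ∀ p : ℝ, 0 ≤ᵐ[volume.restrict (Ioo (-(π / 2)) (π / 2))]
      fun t => cos t ^ p * exp (y * t) := fun p =>
    (ae_restrict_iff' measurableSet_Ioo).2 (ae_of_all _ fun t ht =>
      mul_nonneg (rpow_nonneg (cos_pos_of_mem_Ioo ht).le _) (exp_pos _).le)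
  have hint : ∀ {p : ℝ}, 0 < p → IntegrableOn (fun t => cos t ^ (p - 1) * exp (y * t))
      (Ioo (-(π / 2)) (π / 2)) := fun hp =>
    (intervalIntegrable_iff_integrableOn_Ioo_of_le (by linarith [pi_pos])).1
      (intervalIntegrable_beta_integrand (by linarith) y)
  simp only [beta_eq_setIntegral]
  refine le_of_eq_of_le (setIntegral_congr_fun measurableSet_Ioo fun t ht => ?_)
    (integral_rpow_mul_rpow_le_of_nonneg (hnonneg _) (hnonneg _) (hint hx) (hint hz) ha hb hab)
  have hcos := cos_pos_of_mem_Ioo ht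
  rw [mul_rpow (rpow_nonneg hcos.le _) (exp_pos _).le,
    mul_rpow (rpow_nonneg hcos.le _) (exp_pos _).le, ← rpow_mul hcos.le, ← rpow_mul hcos.le,
    mul_mul_mul_comm, ← rpow_add hcos, ← rpow_add (exp_pos _), hab, rpow_one,
    show (x - 1) * a + (z - 1) * b = a * x + b * z - 1 by linear_combination -hab]

noncomputable def betaSin (x y : ℝ) : ℝ :=
  ∫ t in (-(π / 2))..(π / 2), cos t ^ (x - 1) * exp (y * t) * sin t

theorem intervalIntegrable_betaSin_integrand {r : ℝ} (hr : -1 < r) (y : ℝ) :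
    IntervalIntegrable (fun t => cos t ^ r * exp (y * t) * sin t) volume (-(π / 2)) (π / 2) :=
  (intervalIntegrable_beta_integrand hr y).mul_continuousOn continuous_sin.continuousOn

theorem continuous_cos_rpow_mul_exp {p : ℝ} (hp : 0 ≤ p) (y : ℝ) :
    Continuous fun u => cos u ^ p * exp (y * u) := by
  have := continuous_cos.rpow_const fun _ => Or.inr hp
  fun_prop

theorem hasDerivAt_cos_rpow_mul_exp {p t : ℝ} (ht : 0 < cos t) (y : ℝ) :
    HasDerivAt (fun u => cos u ^ p * exp (y * u))
      (y * (cos t ^ p * exp (y * t)) - p * (cos t ^ (p - 1) * exp (y * t) * sin t)) t := by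
  refine (((hasDerivAt_cos t).rpow_const (p := p) (Or.inl ht.ne')).fun_mul
    ((hasDerivAt_id' t).const_mul y).exp).congr_deriv ?_
  ring

theorem hasDerivAt_cos_rpow_mul_exp_mul_sin {p t : ℝ} (ht : 0 < cos t) (y : ℝ) :
    HasDerivAt (fun u => cos u ^ p * exp (y * u) * sin u)
      ((p + 1) * (cos t ^ (p + 1) * exp (y * t)) - p * (cos t ^ (p - 1) * exp (y * t))
        + y * (cos t ^ p * exp (y * t) * sin t)) t := by
  refine ((hasDerivAt_cos_rpow_mul_exp ht y).fun_mul (hasDerivAt_sin t)).congr_deriv ?_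
  have hp : cos t ^ p = cos t ^ (p - 1) * cos t := by
    rw [← rpow_add_one ht.ne', sub_add_cancel]
  rw [rpow_add_one ht.ne', hp]
  linear_combination -p * cos t ^ (p - 1) * exp (y * t) * sin_sq_add_cos_sq t

theorem mul_beta_add_two_eq_mul_betaSin {x : ℝ} (hx : 0 < x) (y : ℝ) :
    y * beta (x + 2) y = (x + 1) * betaSin (x + 1) y := by
  have hcos := intervalIntegrable_beta_integrand (r := x + 1) (by linarith) y
  have hsin := intervalIntegrable_betaSin_integrand (r := x) (by linarith) y
  have hftc := integral_eq_sub_of_hasDerivAt_of_le (by linarith [pi_pos])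
    (continuous_cos_rpow_mul_exp (p := x + 1) (by linarith) y).continuousOn
    (fun t ht => by
      simpa only [add_sub_cancel_right] using
        hasDerivAt_cos_rpow_mul_exp (p := x + 1) (cos_pos_of_mem_Ioo ht) y)
    ((hcos.const_mul y).sub (hsin.const_mul (x + 1)))
  rw [integral_sub (hcos.const_mul y) (hsin.const_mul _), intervalIntegral.integral_const_mul,
    intervalIntegral.integral_const_mul, cos_neg, cos_pi_div_two, zero_rpow (by linarith)] at hftc
  simp only [zero_mul, sub_zero] at hftc
  simp only [beta, betaSin, show x + 2 - 1 = x + 1 by ring, add_sub_cancel_right]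
  linarith

theorem add_one_mul_beta_add_two_add_mul_betaSin {x : ℝ} (hx : 0 < x) (y : ℝ) :
    (x + 1) * beta (x + 2) y + y * betaSin (x + 1) y = x * beta x y := by
  have hcos₂ := intervalIntegrable_beta_integrand (r := x + 1) (by linarith) y
  have hcos₀ := intervalIntegrable_beta_integrand (r := x - 1) (by linarith) y
  have hsin := intervalIntegrable_betaSin_integrand (r := x) (by linarith) y
  have hint := (hcos₂.const_mul (x + 1)).sub (hcos₀.const_mul x) |>.add (hsin.const_mul y)
  have hftc := integral_eq_sub_of_hasDerivAt_of_le (by linarith [pi_pos])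
    ((continuous_cos_rpow_mul_exp hx.le y).mul continuous_sin).continuousOn
    (fun t ht => hasDerivAt_cos_rpow_mul_exp_mul_sin (cos_pos_of_mem_Ioo ht) y) hint
  rw [integral_add ((hcos₂.const_mul _).sub (hcos₀.const_mul _)) (hsin.const_mul _),
    integral_sub (hcos₂.const_mul _) (hcos₀.const_mul _), intervalIntegral.integral_const_mul,
    intervalIntegral.integral_const_mul, intervalIntegral.integral_const_mul] at hftc
  simp only [Pi.mul_apply, cos_neg, cos_pi_div_two, zero_rpow hx.ne', zero_mul, sub_zero] at hftc
  simp only [beta, betaSin, show x + 2 - 1 = x + 1 by ring, add_sub_cancel_right]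
  linarith

theorem mul_beta_add_two_eq_mul_beta {x : ℝ} (hx : 0 < x) (y : ℝ) :
    ((x + 1) ^ 2 + y ^ 2) * beta (x + 2) y = x * (x + 1) * beta x y := by
  linear_combination (x + 1) * add_one_mul_beta_add_two_add_mul_betaSin hx y
    + y * mul_beta_add_two_eq_mul_betaSin hx y

theorem beta_positive_upper_bound_general (x y s : ℝ) (hx : 0 < x)
    (hs0 : 0 < s) (hs : s < 1 / 2) :
    beta (x + 4 * s) y ≤ beta x y * (x * (x + 1) / ((x + 1) ^ 2 + y ^ 2)) ^ (2 * s) := by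
  have hβ := beta_pos hx y
  have hrec : beta (x + 2) y = beta x y * (x * (x + 1) / ((x + 1) ^ 2 + y ^ 2)) := by
    have := mul_beta_add_two_eq_mul_beta hx y
    field_simp
    linarith
  calc beta (x + 4 * s) y = beta ((1 - 2 * s) * x + 2 * s * (x + 2)) y := by ring_nf
    _ ≤ beta x y ^ (1 - 2 * s) * beta (x + 2) y ^ (2 * s) :=
      beta_mul_add_mul_le_rpow_beta_mul_rpow_beta hx (by linarith) (by linarith) (by linarith)
        (by ring) y
    _ = beta x y * (x * (x + 1) / ((x + 1) ^ 2 + y ^ 2)) ^ (2 * s) := by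
      rw [hrec, mul_rpow hβ.le (by positivity), ← mul_assoc, ← rpow_add hβ, sub_add_cancel,
        rpow_one]

theorem beta_positive_upper_bound (x y s : ℝ) (hx : 0 < x) (hy : 0 < y)
    (hs0 : 0 < s) (hs : s < 1 / 2) :
    beta (x + 4 * s) y ≤ beta x y * (x * (x + 1) / ((x + 1) ^ 2 + y ^ 2)) ^ (2 * s) :=
  beta_positive_upper_bound_general x y s hx hs0 hs
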